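/- There exists a function g : ℕ³ → ℕ such that the following holds for all positive integers s, t, q. If M is a matroid with the (s,2s,t,2t)-property, r(M) ≥ r*(M), and |E(M)| ≥ g(s,t,q), then M has s−1 pairwise disjoint 2t-element cocircuits C*_1, …, C*_{s−1}, and there is a set Z ⊆ E(M) − ⋃_{i∈[s−1]} C*_i such that (1) r_M(Z) ≥ q, and (2) for each z ∈ Z there exists z' ∈ Z − {z} such that {z,z'} is contained in a 2s-element circuit C of M with |C ∩ C*_i| = 2 for each i ∈ [s−1]. -/

import Mathlib

/-!
Every element lies in a `2s`-circuit, so a large matroid has many distinct `2s`-circuits, and by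
the Erdős–Rado sunflower lemma many of them form a sunflower. Eliminating a kernel element
between the two petals of each of many disjoint pairs (strong circuit elimination) shrinks the
kernel, and once it is empty we have `(s - 1) t` pairwise disjoint circuits.

Split these circuits into `s - 1` boxes of `t`. A `2t`-cocircuit through a transversal of a box
meets each circuit of the box in at least two elements, so it lies inside the box; this gives
pairwise disjoint `2t`-cocircuits `C*ᵢ` with union `U`, `|U| ≤ 2t(s - 1)`. For `z ∉ U`, a
`2s`-circuit through `z` and a transversal of the `C*ᵢ` has at most two elements outside `U`:
either it shows `z ∈ cl(U)`, or it pairs `z` with some `z' ∉ U` and meets every `C*ᵢ` in exactly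
two elements. Hence `E ⊆ Z ∪ cl(U)` for the set `Z` of paired elements, and
`|E| / 2 ≤ r(M) ≤ r(Z) + |U|`.
-/

open Set Function

namespace Matroid

variable {α : Type*}

/-- A circuit of a matroid: a minimal dependent set. -/
def IsCircuit' (M : Matroid α) (C : Set α) : Prop := Minimal M.Dep C

/-- A cocircuit of a matroid: a circuit of the dual matroid. -/
def IsCocircuit' (M : Matroid α) (C : Set α) : Prop := M✶.IsCircuit' C

/-- The `ℕ`-valued rank of a set `X` in a matroid `M`:
the size of a largest independent subset of `X`. -/
noncomputable def rk' (M : Matroid α) (X : Set α) : ℕ :=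
  sSup {n : ℕ | ∃ I, M.Indep I ∧ I ⊆ X ∧ I.ncard = n}

/-- The connectivity function `λ(X) = r(X) + r(E − X) − r(M)`. -/
noncomputable def lam' (M : Matroid α) (X : Set α) : ℕ :=
  M.rk' X + M.rk' (M.E \ X) - M.rk' M.E

/-- The `(s,u,t,v)`-property: every `s`-element subset of the ground set is contained in a
circuit of size `u`, and every `t`-element subset is contained in a cocircuit of size `v`. -/
def HasProp (M : Matroid α) (s u t v : ℕ) : Prop :=
  (∀ S ⊆ M.E, S.ncard = s → ∃ C, M.IsCircuit' C ∧ C.ncard = u ∧ S ⊆ C) ∧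
  (∀ T ⊆ M.E, T.ncard = t → ∃ C, M.IsCocircuit' C ∧ C.ncard = v ∧ T ⊆ C)

/-- A `t`-echidna of order `n`: a family of `n` pairwise disjoint `2`-element subsets of the
ground set (spines) such that the union of any `t` spines is a circuit.
(A `t`-coechidna of `M` is a `t`-echidna of `M✶`.) -/
def IsEchidna (M : Matroid α) (t : ℕ) {n : ℕ} (S : Fin n → Set α) : Prop :=
  (∀ i, S i ⊆ M.E) ∧ (∀ i, (S i).ncard = 2) ∧
  Pairwise (Function.onFun Disjoint S) ∧
  ∀ I : Finset (Fin n), I.card = t → M.IsCircuit' (⋃ i ∈ I, S i)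

/-- `M` is an `(s,t)`-spike with associated partition `(A 1, …, A m)`: the `A i` are `m`
pairwise disjoint pairs partitioning the ground set, with `m ≥ max s t`, such that the union of
any `s` pairs is a circuit and the union of any `t` pairs is a cocircuit. -/
def IsSpike (M : Matroid α) (s t : ℕ) {m : ℕ} (A : Fin m → Set α) : Prop :=
  max s t ≤ m ∧ (⋃ i, A i) = M.E ∧
  Pairwise (Function.onFun Disjoint A) ∧ (∀ i, (A i).ncard = 2) ∧
  (∀ I : Finset (Fin m), I.card = s → M.IsCircuit' (⋃ i ∈ I, A i)) ∧
  (∀ I : Finset (Fin m), I.card = t → M.IsCocircuit' (⋃ i ∈ I, A i))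

end Matroid

universe u

open Matroid

section Sunflower

open scoped Finset

variable {α : Type*} [DecidableEq α]

def IsSunflower (G : Finset (Finset α)) (K : Finset α) : Prop :=
  ∀ A ∈ G, ∀ B ∈ G, A ≠ B → A ∩ B = K

def sunflowerBound (p : ℕ) : ℕ → ℕ
  | 0 => 2
  | w + 1 => (w + 1) * p * sunflowerBound p w + 1

/-- `U` is the union of a maximal pairwise disjoint subfamily of `F`. -/
lemma exists_pairwiseDisjoint_or_exists_hitting (F : Finset (Finset α)) {w : ℕ}
    (hF : ∀ A ∈ F, #A ≤ w) (p : ℕ) :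
    (∃ G ⊆ F, #G = p ∧ (G : Set (Finset α)).PairwiseDisjoint id) ∨
      ∃ U : Finset α, #U ≤ w * p ∧ ∀ A ∈ F, A.Nonempty → (A ∩ U).Nonempty := by
  classical
  obtain ⟨G, hG, hmax⟩ := (F.powerset.filter
    fun G : Finset (Finset α) ↦ (G : Set (Finset α)).PairwiseDisjoint id)
    |>.exists_max_image Finset.card ⟨∅, by simp⟩
  simp only [Finset.mem_filter, Finset.mem_powerset] at hG hmax
  by_cases hp : p ≤ #G
  · obtain ⟨G', hG'G, rfl⟩ := Finset.exists_subset_card_eq hp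
    exact .inl ⟨G', hG'G.trans hG.1, rfl, hG.2.subset (by exact_mod_cast hG'G)⟩
  refine .inr ⟨G.biUnion id, ?_, fun A hA hAne ↦ ?_⟩
  · calc #(G.biUnion id) ≤ ∑ B ∈ G, #B := Finset.card_biUnion_le
      _ ≤ ∑ _B ∈ G, w := Finset.sum_le_sum fun B hB ↦ hF B (hG.1 hB)
      _ ≤ w * p := by rw [Finset.sum_const, smul_eq_mul, mul_comm]; gcongr; omega
  by_cases hAG : A ∈ G
  · exact hAne.mono (Finset.subset_inter subset_rfl (Finset.subset_biUnion_of_mem id hAG))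
  by_contra hdisj
  have hins : ((insert A G : Finset (Finset α)) : Set (Finset α)).PairwiseDisjoint id := by
    rw [Finset.coe_insert]
    refine hG.2.insert fun B hB _ ↦ Finset.disjoint_left.2 fun a haA haB ↦ hdisj ?_
    exact ⟨a, Finset.mem_inter.2 ⟨haA, Finset.mem_biUnion.2 ⟨B, hB, haB⟩⟩⟩
  have := hmax _ ⟨Finset.insert_subset hA hG.1, hins⟩
  rw [Finset.card_insert_of_notMem hAG] at this
  omega

lemma exists_le_card_filter_mem {F : Finset (Finset α)} {U : Finset α}
    (hhit : ∀ A ∈ F, (A ∩ U).Nonempty) {n : ℕ} (hn : #U * n < #F) :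
    ∃ x ∈ U, n ≤ #(F.filter (x ∈ ·)) := by
  by_contra! hsmall
  have hcover : F ⊆ U.biUnion fun x ↦ F.filter (x ∈ ·) := fun A hA ↦ by
    obtain ⟨x, hx⟩ := hhit A hA
    obtain ⟨hxA, hxU⟩ := Finset.mem_inter.1 hx
    exact Finset.mem_biUnion.2 ⟨x, hxU, Finset.mem_filter.2 ⟨hA, hxA⟩⟩
  have := (Finset.card_le_card hcover).trans
    (Finset.card_biUnion_le_card_mul _ _ n fun x hx ↦ (hsmall x hx).le)
  omega

lemma IsSunflower.exists_of_subset_image_erase {H G : Finset (Finset α)} {K : Finset α}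
    (h : IsSunflower G K) {x : α} (hxH : ∀ A ∈ H, x ∈ A) (hGH : G ⊆ H.image (·.erase x)) :
    ∃ G' ⊆ H, #G' = #G ∧ IsSunflower G' (insert x K) := by
  have hxG : ∀ A ∈ G, x ∉ A := fun A hA ↦ by
    obtain ⟨B, -, rfl⟩ := Finset.mem_image.1 (hGH hA)
    exact Finset.notMem_erase x B
  have hinj : Set.InjOn (insert x) (G : Set (Finset α)) := fun A hA B hB hAB ↦ by
    rw [← Finset.erase_insert (hxG A hA), hAB, Finset.erase_insert (hxG B hB)]
  refine ⟨G.image (insert x), fun A hA ↦ ?_, Finset.card_image_of_injOn hinj, ?_⟩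
  · obtain ⟨A', hA', rfl⟩ := Finset.mem_image.1 hA
    obtain ⟨B, hB, rfl⟩ := Finset.mem_image.1 (hGH hA')
    rwa [Finset.insert_erase (hxH B hB)]
  simp only [IsSunflower, Finset.mem_image]
  rintro _ ⟨A, hA, rfl⟩ _ ⟨B, hB, rfl⟩ hAB
  rw [← Finset.insert_inter_distrib, h A hA B hB (fun h ↦ hAB (h ▸ rfl))]

/-- The Erdős–Rado sunflower lemma. -/
theorem exists_isSunflower {p w : ℕ} {F : Finset (Finset α)} (hF : ∀ A ∈ F, #A = w)
    (hcard : sunflowerBound p w ≤ #F) : ∃ G ⊆ F, #G = p ∧ ∃ K, IsSunflower G K := by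
  induction w generalizing F with
  | zero =>
    have : #F ≤ 1 := Finset.card_le_one.2 fun A hA B hB ↦ by
      rw [Finset.card_eq_zero.1 (hF A hA), Finset.card_eq_zero.1 (hF B hB)]
    simp only [sunflowerBound] at hcard
    omega
  | succ w ih =>
    rcases exists_pairwiseDisjoint_or_exists_hitting F (fun A hA ↦ (hF A hA).le) p with
      ⟨G, hGF, hGp, hGdisj⟩ | ⟨U, hU, hhit⟩
    · exact ⟨G, hGF, hGp, ∅, fun A hA B hB hAB ↦
        Finset.disjoint_iff_inter_eq_empty.1 (hGdisj hA hB hAB)⟩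
    have hxF : ∀ A ∈ F, (A ∩ U).Nonempty := fun A hA ↦
      hhit A hA (Finset.card_pos.1 (by rw [hF A hA]; omega))
    obtain ⟨x, -, hx⟩ := exists_le_card_filter_mem hxF (n := sunflowerBound p w) (by
      have := Nat.mul_le_mul_right (sunflowerBound p w) hU
      simp only [sunflowerBound] at hcard
      omega)
    set H := F.filter (x ∈ ·)
    have hxH : ∀ A ∈ H, x ∈ A := fun A hA ↦ (Finset.mem_filter.1 hA).2
    have herase : Set.InjOn (·.erase x) (H : Set (Finset α)) := fun A hA B hB hAB ↦ by
      rw [← Finset.insert_erase (hxH A hA), ← Finset.insert_erase (hxH B hB)]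
      exact congrArg (insert x) hAB
    obtain ⟨G, hGH, hGp, K, hK⟩ := ih (F := H.image (·.erase x))
      (by
        simp only [Finset.mem_image]
        rintro _ ⟨A, hA, rfl⟩
        rw [Finset.card_erase_of_mem (hxH A hA), hF A (Finset.mem_filter.1 hA).1]
        rfl)
      (by rwa [Finset.card_image_of_injOn herase])
    obtain ⟨G', hG'H, hG'p, hG'⟩ := hK.exists_of_subset_image_erase hxH hGH
    exact ⟨G', hG'H.trans (Finset.filter_subset _ F), hG'p.trans hGp, _, hG'⟩

end Sunflower

section KernelElimination

open scoped Finset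

variable {α : Type*}

def IsWeakSunflower (G : Finset (Set α)) (R : Set α) : Prop :=
  ∀ C ∈ G, ¬ C ⊆ R ∧ ∀ C' ∈ G, C ≠ C' → C ∩ C' ⊆ R

lemma IsWeakSunflower.subset {G G' : Finset (Set α)} {R : Set α} (h : IsWeakSunflower G R)
    (hG' : G' ⊆ G) : IsWeakSunflower G' R :=
  fun C hC ↦ ⟨(h C (hG' hC)).1, fun C' hC' ↦ (h C (hG' hC)).2 C' (hG' hC')⟩

lemma IsWeakSunflower.of_forall_notMem {G G' : Finset (Set α)} {R : Set α} {y : α}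
    (h : IsWeakSunflower G (insert y R)) (hG' : G' ⊆ G) (hy : ∀ C ∈ G', y ∉ C) :
    IsWeakSunflower G' R := by
  refine fun C hC ↦ ⟨fun hCR ↦ (h C (hG' hC)).1 (hCR.trans (subset_insert y R)),
    fun C' hC' hne x hx ↦ ?_⟩
  obtain rfl | hxR := (h C (hG' hC)).2 C' (hG' hC') hne hx
  · exact absurd hx.1 (hy C hC)
  · exact hxR

lemma IsWeakSunflower.exists_pairwise_disjoint {G : Finset (Set α)} (h : IsWeakSunflower G ∅)
    {m : ℕ} (hm : m ≤ #G) :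
    ∃ D : Fin m → Set α, (∀ i, D i ∈ G) ∧ Pairwise (Disjoint on D) := by
  obtain ⟨e⟩ : Nonempty (Fin m ↪ G) := Function.Embedding.nonempty_of_card_le (by simpa)
  refine ⟨fun i ↦ e i, fun i ↦ (e i).2, fun i j hij ↦ Set.disjoint_iff.2 ?_⟩
  exact (h _ (e i).2).2 _ (e j).2 fun hij' ↦ hij (e.injective (Subtype.ext hij'))

lemma IsSunflower.isWeakSunflower [DecidableEq α] {G : Finset (Finset α)} {K : Finset α}
    (h : IsSunflower G K) {w : ℕ} (hG : ∀ A ∈ G, #A = w) (h2 : 2 ≤ #G) :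
    IsWeakSunflower (G.image (↑)) (K : Set α) := by
  simp only [IsWeakSunflower, Finset.mem_image, forall_exists_index, and_imp,
    forall_apply_eq_imp_iff₂]
  refine fun A hA ↦ ⟨fun hAK ↦ ?_, fun B hB hAB ↦ ?_⟩
  · obtain ⟨B, hB, hBA⟩ := Finset.exists_mem_ne h2 A
    have hAB : A ⊆ B := by
      rw [← h B hB A hA hBA] at hAK
      exact (Finset.coe_subset.1 hAK).trans Finset.inter_subset_left
    exact hBA (Finset.eq_of_subset_of_card_le hAB (by rw [hG A hA, hG B hB])).symm
  · rw [← Finset.coe_inter, h A hA B hB (fun h' ↦ hAB (h' ▸ rfl))]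

variable {M : Matroid α}

/-- Pair up members of `G` and eliminate `y` from each pair, keeping a point outside `R`. -/
lemma IsWeakSunflower.exists_eliminate {G : Finset (Set α)} {R : Set α} {y : α}
    (h : IsWeakSunflower G R) (hG : ∀ C ∈ G, M.IsCircuit C ∧ y ∈ C) {N : ℕ} (hN : 2 * N ≤ #G) :
    ∃ H : Finset (Set α), N ≤ #H ∧ (∀ D ∈ H, M.IsCircuit D) ∧ IsWeakSunflower H (R \ {y}) := by
  classical
  obtain ⟨e⟩ : Nonempty (Fin N ⊕ Fin N ↪ G) :=
    Function.Embedding.nonempty_of_card_le (by simp; omega)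
  have hsrc : ∀ a b, a ≠ b → (e a : Set α) ∩ e b ⊆ R := fun a b hab ↦
    (h _ (e a).2).2 _ (e b).2 fun h' ↦ hab (e.injective (Subtype.ext h'))
  have hout : ∀ j, ∃ f ∈ (e (.inl j) : Set α), f ∉ R := fun j ↦ not_subset.1 (h _ (e _).2).1
  choose f hfP hfR using hout
  have hfQ : ∀ j, f j ∉ (e (.inr j) : Set α) := fun j hf ↦
    hfR j (hsrc _ _ Sum.inl_ne_inr ⟨hfP j, hf⟩)
  have helim : ∀ j, ∃ D ⊆ ((e (.inl j) : Set α) ∪ e (.inr j)) \ {y}, M.IsCircuit D ∧ f j ∈ D :=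
    fun j ↦ (hG _ (e _).2).1.strong_elimination (hG _ (e _).2).1 (hG _ (e _).2).2
      (hG _ (e _).2).2 (hfP j) (hfQ j)
  choose D hDsub hD hfD using helim
  have hDD : ∀ j j', j ≠ j' → D j ∩ D j' ⊆ R \ {y} := by
    intro j j' hjj' x ⟨hx, hx'⟩
    obtain ⟨hxj, hxy⟩ := hDsub j hx
    refine ⟨?_, hxy⟩
    rcases hxj with hxj | hxj <;> rcases (hDsub j' hx').1 with hxj' | hxj' <;>
      exact hsrc _ _ (by simp [hjj']) ⟨hxj, hxj'⟩
  have hDinj : Injective D := fun j j' hDj ↦ by_contra fun hjj' ↦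
    hfR j (hDD j j' hjj' ⟨hfD j, hDj ▸ hfD j⟩).1
  refine ⟨Finset.univ.image D, by simp [Finset.card_image_of_injective _ hDinj], ?_, ?_⟩
  · simp only [Finset.mem_image, Finset.mem_univ, true_and, forall_exists_index,
      forall_apply_eq_imp_iff]
    exact hD
  · simp only [IsWeakSunflower, Finset.mem_image, Finset.mem_univ, true_and,
      forall_exists_index, forall_apply_eq_imp_iff]
    exact fun j ↦ ⟨fun hsub ↦ hfR j (hsub (hfD j)).1,
      fun j' hne ↦ hDD j j' fun hjj' ↦ hne (hjj' ▸ rfl)⟩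

theorem IsWeakSunflower.exists_pairwise_disjoint_isCircuit {G : Finset (Set α)} {R : Finset α}
    (h : IsWeakSunflower G R) (hG : ∀ C ∈ G, M.IsCircuit C) {m : ℕ} (hcard : 3 ^ #R * m ≤ #G) :
    ∃ D : Fin m → Set α, (∀ i, M.IsCircuit (D i)) ∧ Pairwise (Disjoint on D) := by
  classical
  induction R using Finset.induction_on generalizing G with
  | empty =>
    obtain ⟨D, hDG, hD⟩ := (Finset.coe_empty (α := α) ▸ h).exists_pairwise_disjoint
      (m := m) (by simpa using hcard)
    exact ⟨D, fun i ↦ hG _ (hDG i), hD⟩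
  | insert y R hyR ih =>
    rw [Finset.coe_insert] at h
    rw [Finset.card_insert_of_notMem hyR, pow_succ] at hcard
    by_cases hGn : 3 ^ #R * m ≤ #(G.filter (y ∉ ·))
    · exact ih (h.of_forall_notMem (Finset.filter_subset _ G)
        fun C hC ↦ (Finset.mem_filter.1 hC).2) (fun C hC ↦ hG C (Finset.mem_filter.1 hC).1) hGn
    have hsplit := Finset.card_filter_add_card_filter_not (s := G) (y ∈ ·)
    obtain ⟨H, hHcard, hH, hHw⟩ := (h.subset (Finset.filter_subset (y ∈ ·) G)).exists_eliminate
      (fun C hC ↦ ⟨hG C (Finset.mem_filter.1 hC).1, (Finset.mem_filter.1 hC).2⟩)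
      (N := 3 ^ #R * m) (by linarith)
    rw [insert_sdiff_self_of_notMem (Finset.mem_coe.not.2 hyR)] at hHw
    exact ih hHw hH hHcard

end KernelElimination

section SetLemmas

variable {α ι : Type*}

lemma exists_injective_forall_mem {D : ι → Set α} (hne : ∀ i, (D i).Nonempty)
    (hdisj : Pairwise (Disjoint on D)) : ∃ x : ι → α, Injective x ∧ ∀ i, x i ∈ D i := by
  choose x hx using hne
  exact ⟨x, fun i j hij ↦ by_contra fun hne ↦ (hdisj hne).ne_of_mem (hx i) (hx j) hij, hx⟩

lemma ncard_eq_ncard_sdiff_iUnion_add_sum [Fintype ι] {C : Set α} (hC : C.Finite)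
    {Cs : ι → Set α} (hdisj : Pairwise (Disjoint on Cs)) :
    C.ncard = (C \ ⋃ i, Cs i).ncard + ∑ i, (C ∩ Cs i).ncard := by
  rw [← ncard_inter_add_ncard_sdiff_eq_ncard C (⋃ i, Cs i) hC, inter_iUnion,
    ncard_iUnion_of_finite (fun i ↦ hC.inter_of_left _)
      (fun i j hij ↦ (hdisj hij).mono inter_subset_right inter_subset_right),
    finsum_eq_sum_of_fintype, add_comm]

end SetLemmas

namespace Matroid

open scoped Finset

variable {α : Type*} {M : Matroid α}

lemma forall_mem_exists_isCircuit_of_forall_subset {s u : ℕ} (hs : 0 < s)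
    (hsE : s ≤ M.E.ncard)
    (hcirc : ∀ S ⊆ M.E, S.ncard = s → ∃ C, M.IsCircuit C ∧ C.ncard = u ∧ S ⊆ C) :
    ∀ e ∈ M.E, ∃ C, M.IsCircuit C ∧ C.ncard = u ∧ e ∈ C := fun e he ↦ by
  obtain ⟨S, heS, hSE, hScard⟩ :=
    exists_subsuperset_card_eq (singleton_subset_iff.2 he) (by simpa) hsE
  obtain ⟨C, hC, hCcard, hSC⟩ := hcirc S hSE hScard
  exact ⟨C, hC, hCcard, hSC (heS rfl)⟩

lemma exists_finset_isCircuit_of_forall_mem (hE : M.E.Finite) {w : ℕ}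
    (hcov : ∀ e ∈ M.E, ∃ C, M.IsCircuit C ∧ C.ncard = w ∧ e ∈ C) :
    ∃ F : Finset (Finset α), M.E.ncard ≤ w * #F ∧ ∀ A ∈ F, M.IsCircuit ↑A ∧ #A = w := by
  classical
  have hcov' : ∀ e ∈ M.E, ∃ A : Finset α, M.IsCircuit ↑A ∧ #A = w ∧ e ∈ A := fun e he ↦ by
    obtain ⟨C, hC, hCw, heC⟩ := hcov e he
    obtain ⟨A, rfl⟩ := (hE.subset hC.subset_ground).exists_finset_coe
    exact ⟨A, hC, by rwa [ncard_coe_finset] at hCw, heC⟩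
  choose! A hA hAw heA using hcov'
  refine ⟨hE.toFinset.image A, ?_, ?_⟩
  · rw [ncard_eq_toFinset_card _ hE]
    refine Finset.card_le_mul_card_image _ w fun B hB ↦ ?_
    obtain ⟨e, he, rfl⟩ := Finset.mem_image.1 hB
    rw [← hAw e (hE.mem_toFinset.1 he)]
    refine Finset.card_le_card fun e' he' ↦ ?_
    obtain ⟨he'E, hAe'⟩ := Finset.mem_filter.1 he'
    exact hAe' ▸ heA e' (hE.mem_toFinset.1 he'E)
  · simp only [Finset.mem_image, forall_exists_index, and_imp, forall_apply_eq_imp_iff₂]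
    exact fun e he ↦ ⟨hA e (hE.mem_toFinset.1 he), hAw e (hE.mem_toFinset.1 he)⟩

theorem exists_pairwise_disjoint_isCircuit (hE : M.E.Finite) {w : ℕ} (hw : 0 < w)
    (hcov : ∀ e ∈ M.E, ∃ C, M.IsCircuit C ∧ C.ncard = w ∧ e ∈ C) (m : ℕ)
    (hcard : w * sunflowerBound (3 ^ w * m + 2) w ≤ M.E.ncard) :
    ∃ D : Fin m → Set α, (∀ i, M.IsCircuit (D i)) ∧ Pairwise (Disjoint on D) := by
  classical
  obtain ⟨F, hFcard, hF⟩ := exists_finset_isCircuit_of_forall_mem hE hcov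
  -- `3 ^ w * m` petals suffice for the kernel elimination since `#K ≤ w`; two more petals
  -- ensure that no petal lies inside the kernel.
  obtain ⟨G, hGF, hGcard, K, hK⟩ := exists_isSunflower (fun A hA ↦ (hF A hA).2)
    (Nat.le_of_mul_le_mul_left (hcard.trans hFcard) hw)
  have hKw : #K ≤ w := by
    obtain ⟨A, hA, B, hB, hAB⟩ := Finset.one_lt_card.1 (by omega : 1 < #G)
    rw [← hK A hA B hB hAB, ← (hF A (hGF hA)).2]
    exact Finset.card_le_card Finset.inter_subset_left
  have hweak := hK.isWeakSunflower (fun A hA ↦ (hF A (hGF hA)).2) (by omega)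
  refine hweak.exists_pairwise_disjoint_isCircuit ?_ ?_
  · simp only [Finset.mem_image, forall_exists_index, and_imp, forall_apply_eq_imp_iff₂]
    exact fun A hA ↦ (hF A (hGF hA)).1
  · rw [Finset.card_image_of_injective _ Finset.coe_injective, hGcard]
    have := Nat.pow_le_pow_right (by norm_num : 0 < 3) hKw
    nlinarith

lemma IsCircuit.two_le_ncard_inter {C K : Set α} (hC : M.IsCircuit C) (hK : M.IsCocircuit K)
    (hCK : (C ∩ K).Nonempty) (hfin : (C ∩ K).Finite) : 2 ≤ (C ∩ K).ncard :=
  have := hfin.to_subtype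
  one_lt_ncard_iff_nontrivial.2 (hC.isCocircuit_inter_nontrivial hK hCK)

/-- Each `D i ∩ K` has at least two elements, so their union already exhausts `K`. -/
lemma IsCocircuit.subset_iUnion {ι : Type*} [Fintype ι] {D : ι → Set α}
    (hD : ∀ i, M.IsCircuit (D i)) (hdisj : Pairwise (Disjoint on D)) {K : Set α}
    (hK : M.IsCocircuit K) (hKfin : K.Finite) (hKcard : K.ncard ≤ 2 * Fintype.card ι)
    (hmeet : ∀ i, (D i ∩ K).Nonempty) : K ⊆ ⋃ i, D i := by
  have hfin : ∀ i, (D i ∩ K).Finite := fun i ↦ hKfin.inter_of_right _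
  have hsum : K.ncard ≤ (⋃ i, D i ∩ K).ncard := by
    rw [ncard_iUnion_of_finite hfin fun i j hij ↦ (hdisj hij).mono inter_subset_left
      inter_subset_left, finsum_eq_sum_of_fintype]
    calc K.ncard ≤ ∑ _i : ι, 2 := by simpa [mul_comm] using hKcard
      _ ≤ ∑ i, (D i ∩ K).ncard :=
        Finset.sum_le_sum fun i _ ↦ (hD i).two_le_ncard_inter hK (hmeet i) (hfin i)
  have hKeq := eq_of_subset_of_ncard_le (iUnion_subset fun i ↦ inter_subset_right) hsum hKfin
  rw [← hKeq]
  exact iUnion_mono fun i ↦ inter_subset_left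

theorem exists_pairwise_disjoint_isCocircuit (hE : M.E.Finite) {t : ℕ}
    (hco : ∀ T ⊆ M.E, T.ncard = t → ∃ K, M.IsCocircuit K ∧ K.ncard = 2 * t ∧ T ⊆ K)
    {ι : Type*} (D : ι × Fin t → Set α) (hD : ∀ x, M.IsCircuit (D x))
    (hdisj : Pairwise (Disjoint on D)) :
    ∃ Cs : ι → Set α, Pairwise (Disjoint on Cs) ∧
      ∀ i, M.IsCocircuit (Cs i) ∧ (Cs i).ncard = 2 * t := by
  obtain ⟨x, hxinj, hxD⟩ := exists_injective_forall_mem (fun p ↦ (hD p).nonempty) hdisj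
  have hT : ∀ i, range (fun l ↦ x (i, l)) ⊆ M.E ∧ (range fun l ↦ x (i, l)).ncard = t :=
    fun i ↦ ⟨range_subset_iff.2 fun l ↦ (hD (i, l)).subset_ground (hxD (i, l)), by
      rw [ncard_range_of_injective (f := fun l ↦ x (i, l))
        (hxinj.comp (Prod.mk_right_injective i)), Nat.card_fin]⟩
  choose K hK hKcard hTK using fun i ↦ hco _ (hT i).1 (hT i).2
  have hKbox : ∀ i, K i ⊆ ⋃ l, D (i, l) := fun i ↦
    (hK i).subset_iUnion (fun l ↦ hD (i, l)) (fun l l' hll' ↦ hdisj (by simpa using hll'))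
      (hE.subset (hK i).subset_ground) (by simp [hKcard i])
      fun l ↦ ⟨x (i, l), hxD (i, l), hTK i (mem_range_self l)⟩
  refine ⟨K, fun i i' hii' ↦ ?_, fun i ↦ ⟨hK i, hKcard i⟩⟩
  refine Disjoint.mono (hKbox i) (hKbox i') ?_
  simp only [disjoint_iUnion_left, disjoint_iUnion_right]
  exact fun l l' ↦ hdisj (by simp [hii'])

/-- The intersections `C ∩ Cs i` have at least two elements each, which leaves at most two
elements of `C` outside the cocircuits. -/
lemma IsCircuit.mem_closure_or_forall_ncard_inter_eq_two {n : ℕ} {Cs : Fin n → Set α}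
    (hCs : ∀ i, M.IsCocircuit (Cs i)) (hdisj : Pairwise (Disjoint on Cs)) {C : Set α}
    (hC : M.IsCircuit C) (hCcard : C.ncard = 2 * (n + 1)) (hmeet : ∀ i, (C ∩ Cs i).Nonempty)
    {z : α} (hz : z ∈ C \ ⋃ i, Cs i) :
    z ∈ M.closure (⋃ i, Cs i) ∨ ∃ z' ∈ C \ ⋃ i, Cs i, z' ≠ z ∧ ∀ i, (C ∩ Cs i).ncard = 2 := by
  have hCfin : C.Finite := finite_of_ncard_pos (by omega)
  have h2 : ∀ i, 2 ≤ (C ∩ Cs i).ncard := fun i ↦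
    hC.two_le_ncard_inter (hCs i) (hmeet i) (hCfin.inter_of_left _)
  have hsum : ∑ _i : Fin n, 2 ≤ ∑ i, (C ∩ Cs i).ncard := Finset.sum_le_sum fun i _ ↦ h2 i
  have hpart := ncard_eq_ncard_sdiff_iUnion_add_sum hCfin hdisj (Cs := Cs)
  by_cases hpair : ∃ z' ∈ C \ ⋃ i, Cs i, z' ≠ z
  · obtain ⟨z', hz', hz'z⟩ := hpair
    have : 1 < (C \ ⋃ i, Cs i).ncard :=
      (one_lt_ncard hCfin.sdiff).2 ⟨z, hz, z', hz', hz'z.symm⟩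
    have hsum_eq : ∑ _i : Fin n, 2 = ∑ i, (C ∩ Cs i).ncard := by simp at hsum ⊢; omega
    exact .inr ⟨z', hz', hz'z, fun i ↦
      ((Finset.sum_eq_sum_iff_of_le fun i _ ↦ h2 i).1 hsum_eq i (Finset.mem_univ i)).symm⟩
  push Not at hpair
  refine .inl (M.closure_subset_closure (fun x hx ↦ ?_)
    (hC.mem_closure_sdiff_singleton_of_mem hz.1))
  by_contra hxU
  exact hx.2 (hpair x ⟨hx.1, hxU⟩)

lemma exists_isCircuit_forall_inter_nonempty {n : ℕ}
    (hcirc : ∀ S ⊆ M.E, S.ncard = n + 1 → ∃ C, M.IsCircuit C ∧ C.ncard = 2 * (n + 1) ∧ S ⊆ C)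
    {Cs : Fin n → Set α} (hCs : ∀ i, (Cs i).Nonempty) (hCsE : ∀ i, Cs i ⊆ M.E)
    (hdisj : Pairwise (Disjoint on Cs)) {z : α} (hz : z ∈ M.E \ ⋃ i, Cs i) :
    ∃ C, M.IsCircuit C ∧ C.ncard = 2 * (n + 1) ∧ z ∈ C ∧ ∀ i, (C ∩ Cs i).Nonempty := by
  obtain ⟨c, hcinj, hc⟩ := exists_injective_forall_mem hCs hdisj
  have hzc : z ∉ range c := by
    rintro ⟨i, rfl⟩
    exact hz.2 (mem_iUnion_of_mem i (hc i))
  obtain ⟨C, hC, hCcard, hSC⟩ := hcirc (insert z (range c))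
    (insert_subset hz.1 (range_subset_iff.2 fun i ↦ hCsE i (hc i)))
    (by rw [ncard_insert_of_notMem hzc, ncard_range_of_injective hcinj, Nat.card_fin])
  exact ⟨C, hC, hCcard, hSC (mem_insert z _),
    fun i ↦ ⟨c i, hSC (mem_insert_of_mem z (mem_range_self i)), hc i⟩⟩

theorem exists_pairs_of_pairwise_disjoint_isCocircuit {n : ℕ}
    (hcirc : ∀ S ⊆ M.E, S.ncard = n + 1 → ∃ C, M.IsCircuit C ∧ C.ncard = 2 * (n + 1) ∧ S ⊆ C)
    {Cs : Fin n → Set α} (hCs : ∀ i, M.IsCocircuit (Cs i)) (hdisj : Pairwise (Disjoint on Cs)) :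
    ∃ Z ⊆ M.E \ ⋃ i, Cs i, M.E ⊆ Z ∪ M.closure (⋃ i, Cs i) ∧
      ∀ z ∈ Z, ∃ z' ∈ Z \ {z}, ∃ C, M.IsCircuit C ∧ C.ncard = 2 * (n + 1) ∧
        {z, z'} ⊆ C ∧ ∀ i, (C ∩ Cs i).ncard = 2 := by
  set W := M.E \ ⋃ i, Cs i
  refine ⟨{z ∈ W | ∃ z' ∈ W \ {z}, ∃ C, M.IsCircuit C ∧ C.ncard = 2 * (n + 1) ∧ {z, z'} ⊆ C ∧
    ∀ i, (C ∩ Cs i).ncard = 2}, sep_subset _ _, fun x hx ↦ ?_, ?_⟩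
  · by_cases hxU : x ∈ ⋃ i, Cs i
    · exact .inr (M.subset_closure _ (iUnion_subset fun i ↦ (hCs i).subset_ground) hxU)
    obtain ⟨C, hC, hCcard, hxC, hmeet⟩ := exists_isCircuit_forall_inter_nonempty hcirc
      (fun i ↦ (hCs i).nonempty) (fun i ↦ (hCs i).subset_ground) hdisj ⟨hx, hxU⟩
    obtain hcl | ⟨z', hz', hz'x, h2⟩ :=
      hC.mem_closure_or_forall_ncard_inter_eq_two hCs hdisj hCcard hmeet ⟨hxC, hxU⟩
    · exact .inr hcl
    exact .inl ⟨⟨hx, hxU⟩, z', ⟨⟨hC.subset_ground hz'.1, hz'.2⟩, hz'x⟩, C, hC, hCcard,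
      pair_subset hxC hz'.1, h2⟩
  · rintro z ⟨hzW, z', ⟨hz'W, hz'z⟩, C, hC, hCcard, hzC, h2⟩
    refine ⟨z', ⟨⟨hz'W, z, ⟨hzW, Ne.symm hz'z⟩, C, hC, hCcard, ?_, h2⟩, hz'z⟩, C, hC, hCcard,
      hzC, h2⟩
    rwa [pair_comm]

lemma rk'_eq_ncard_of_isBasis' (hE : M.E.Finite) {I X : Set α} (hI : M.IsBasis' I X) :
    M.rk' X = I.ncard := by
  refine le_antisymm (csSup_le ⟨_, I, hI.indep, hI.subset, rfl⟩ ?_)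
    (le_csSup ⟨M.E.ncard, ?_⟩ ⟨I, hI.indep, hI.subset, rfl⟩)
  · rintro _ ⟨J, hJ, hJX, rfl⟩
    have hJI := hJ.encard_le_eRk_of_subset hJX
    rw [hI.eRk_eq_encard] at hJI
    exact ENat.toNat_le_toNat hJI (hE.subset hI.indep.subset_ground).encard_lt_top.ne
  · rintro _ ⟨J, hJ, -, rfl⟩
    exact ncard_le_ncard hJ.subset_ground hE

lemma cast_rk'_eq_eRk (hE : M.E.Finite) (X : Set α) : (M.rk' X : ℕ∞) = M.eRk X := by
  obtain ⟨I, hI⟩ := M.exists_isBasis' X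
  rw [rk'_eq_ncard_of_isBasis' hE hI, hI.eRk_eq_encard,
    (hE.subset hI.indep.subset_ground).cast_ncard_eq]

lemma rk'_ground_le_rk'_add_ncard (hE : M.E.Finite) {Z U : Set α} (hU : U.Finite)
    (hcover : M.E ⊆ Z ∪ M.closure U) : M.rk' M.E ≤ M.rk' Z + U.ncard := by
  have h : M.eRk M.E ≤ M.eRk Z + U.encard := calc
    M.eRk M.E ≤ M.eRk (Z ∪ M.closure U) := M.eRk_mono hcover
    _ ≤ M.eRk Z + M.eRk (M.closure U) := M.eRk_union_le_eRk_add_eRk _ _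
    _ ≤ M.eRk Z + U.encard := by rw [eRk_closure_eq]; gcongr; exact M.eRk_le_encard U
  rw [← cast_rk'_eq_eRk hE, ← cast_rk'_eq_eRk hE, ← hU.cast_ncard_eq] at h
  exact_mod_cast h

lemma ncard_ground_le_two_mul_rk' (hE : M.E.Finite) (h : M✶.rk' M.E ≤ M.rk' M.E) :
    M.E.ncard ≤ 2 * M.rk' M.E := by
  have hsum := M.eRank_add_eRank_dual
  rw [← eRk_ground, ← eRk_ground, dual_ground, ← cast_rk'_eq_eRk hE,
    ← cast_rk'_eq_eRk (M := M✶) hE, ← hE.cast_ncard_eq] at hsum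
  have : M.rk' M.E + M✶.rk' M.E = M.E.ncard := by exact_mod_cast hsum
  omega

end Matroid

/-- There is a function `g : ℕ³ → ℕ` such that any (finite) matroid `M` with the
`(s,2s,t,2t)`-property, `r(M) ≥ r⋆(M)` and `|E(M)| ≥ g(s,t,q)` has `s − 1` pairwise disjoint
`2t`-element cocircuits `Cs 1, …, Cs (s−1)` and a set `Z ⊆ E(M) − ⋃ᵢ Cs i` with `r(Z) ≥ q`
such that every `z ∈ Z` forms, with some `z' ∈ Z − {z}`, a pair contained in a `2s`-element
circuit meeting each `Cs i` in exactly two elements. -/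
theorem statement9 :
    ∃ g : ℕ × ℕ × ℕ → ℕ, ∀ (s t q : ℕ), 0 < s → 0 < t → 0 < q →
      ∀ {α : Type u} (M : Matroid α), M.E.Finite →
        M.HasProp s (2 * s) t (2 * t) → M✶.rk' M.E ≤ M.rk' M.E →
        g (s, t, q) ≤ M.E.ncard →
        ∃ Cs : Fin (s - 1) → Set α, Pairwise (Function.onFun Disjoint Cs) ∧
          (∀ i, M.IsCocircuit' (Cs i) ∧ (Cs i).ncard = 2 * t) ∧
          ∃ Z ⊆ M.E \ ⋃ i, Cs i, q ≤ M.rk' Z ∧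
            ∀ z ∈ Z, ∃ z' ∈ Z \ {z}, ∃ C, M.IsCircuit' C ∧ C.ncard = 2 * s ∧
              {z, z'} ⊆ C ∧ ∀ i, (C ∩ Cs i).ncard = 2 := by
  refine ⟨fun p ↦ 2 * p.2.2 + 4 * p.2.1 * p.1 + p.1 +
    2 * p.1 * sunflowerBound (3 ^ (2 * p.1) * ((p.1 - 1) * p.2.1) + 2) (2 * p.1), ?_⟩
  rintro s t q hs - - α M hE ⟨hcirc, hco⟩ hdual hcard
  obtain ⟨n, rfl⟩ : ∃ n, s = n + 1 := ⟨s - 1, by omega⟩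
  simp only [Nat.add_sub_cancel] at hcard ⊢
  obtain ⟨D, hD, hDdisj⟩ := exists_pairwise_disjoint_isCircuit hE (by omega : 0 < 2 * (n + 1))
    (forall_mem_exists_isCircuit_of_forall_subset hs (by omega) hcirc) (n * t) (by omega)
  obtain ⟨Cs, hCsdisj, hCs⟩ := exists_pairwise_disjoint_isCocircuit hE hco
    (D ∘ finProdFinEquiv) (fun x ↦ hD _) fun x y hxy ↦ hDdisj (finProdFinEquiv.injective.ne hxy)
  obtain ⟨Z, hZW, hEZ, hZ⟩ :=
    exists_pairs_of_pairwise_disjoint_isCocircuit hcirc (fun i ↦ (hCs i).1) hCsdisj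
  refine ⟨Cs, hCsdisj, hCs, Z, hZW, ?_, hZ⟩
  have hU : (⋃ i, Cs i).ncard ≤ n * (2 * t) :=
    (ncard_iUnion_le_of_fintype Cs).trans (by simp [(hCs _).2])
  have hrk := M.rk'_ground_le_rk'_add_ncard hE
    (finite_iUnion fun i ↦ hE.subset (hCs i).1.subset_ground) hEZ
  have hhalf := M.ncard_ground_le_two_mul_rk' hE hdual
  nlinarith
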